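/- Let $r$ be a $C^3$ strictly plurisubharmonic function on an open set in $\mathbb{C}^n$, $\phi(\zeta,z) = F(\zeta,z) - r(\zeta)$ with $F$ the Levi polynomial of $r$ at $\zeta$. Then on compact subsets, for $r(\zeta), r(z) \le 0$ and $|\zeta - z|$ small, $|\phi(\zeta,z)| \ge c\big( |\langle \partial r(z), \zeta - z\rangle| + |\zeta - z|^2 \big)$ for some $c > 0$, where $\langle \partial r(z), \zeta - z\rangle = \sum_j \partial_{z_j} r(z)(\zeta_j - z_j)$. -/

import Mathlib

open scoped ComplexConjugate

/-- The Wirtinger derivative `∂f/∂ζ_j` of a (real-differentiable) function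
`f : ℂⁿ → ℂ`, namely `(1/2)(∂f/∂x_j - i ∂f/∂y_j)`. -/
noncomputable def wirtD (n : ℕ) (f : EuclideanSpace ℂ (Fin n) → ℂ)
    (ζ : EuclideanSpace ℂ (Fin n)) (j : Fin n) : ℂ :=
  (1 / 2 : ℂ) * (fderiv ℝ f ζ (EuclideanSpace.single j 1) -
    Complex.I * fderiv ℝ f ζ (EuclideanSpace.single j Complex.I))

/-- The conjugate Wirtinger derivative `∂f/∂ζ̄_j = (1/2)(∂f/∂x_j + i ∂f/∂y_j)`. -/
noncomputable def wirtDBar (n : ℕ) (f : EuclideanSpace ℂ (Fin n) → ℂ)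
    (ζ : EuclideanSpace ℂ (Fin n)) (j : Fin n) : ℂ :=
  (1 / 2 : ℂ) * (fderiv ℝ f ζ (EuclideanSpace.single j 1) +
    Complex.I * fderiv ℝ f ζ (EuclideanSpace.single j Complex.I))

/-- The Levi polynomial of `r` at `ζ`:
`F(ζ,z) = ∑_j ∂r/∂ζ_j(ζ)(ζ_j-z_j) - (1/2)∑_{j,k} ∂²r/∂ζ_j∂ζ_k(ζ)(ζ_j-z_j)(ζ_k-z_k)`. -/
noncomputable def leviPoly (n : ℕ) (r : EuclideanSpace ℂ (Fin n) → ℝ)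
    (ζ z : EuclideanSpace ℂ (Fin n)) : ℂ :=
  (∑ j, wirtD n (fun w => (r w : ℂ)) ζ j * (ζ j - z j)) -
    (1 / 2 : ℂ) * ∑ j, ∑ k,
      wirtD n (fun w => wirtD n (fun w' => (r w' : ℂ)) w k) ζ j * (ζ j - z j) * (ζ k - z k)

/-!
Put `v = ζ - z` and expand `r` to second order at `ζ` in Wirtinger coordinates:
`dr(ζ)(-v) = -2 Re ⟨∂r(ζ), v⟩` and `d²r(ζ)(v, v) = 2 Re ∑ ∂²r/∂ζ_j∂ζ_k v_j v_k + 2 Re L_ζ(v)`,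
`L` the Levi form. Hence `2 Re φ(ζ, z) = -r(ζ) - r(z) + Re L_ζ(v) + O(|v|³)`, which is at
least `-r(ζ) + c |v|² / 2` for small `v` because `r(z) ≤ 0` and `L_ζ(v) ≥ c |v|²`. So `-r(ζ)`
and `|v|²` are `O(|φ|)`, and then so is
`⟨∂r(z), v⟩ = φ + r(ζ) + ½ ∑ ∂²r/∂ζ_j∂ζ_k v_j v_k + O(|v|²)`.
The constants only involve `c` and Lipschitz constants of `dr` and `d²r` near the compact set,
never the values of `r`, which is why the estimate survives translating `r` by a constant.
-/

open Metric NNReal Topology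

section Calculus

variable {E F : Type*} [NormedAddCommGroup E] [NormedSpace ℝ E] [NormedAddCommGroup F]
  [NormedSpace ℝ F]

lemma ContDiffOn.exists_lipschitzOnWith_of_isCompact {g : E → F} {U K : Set E}
    (hU : IsOpen U) (hg : ContDiffOn ℝ 1 g U) (hK : IsCompact K) (hKU : K ⊆ U) :
    ∃ L, LipschitzOnWith L g K :=
  LocallyLipschitzOn.exists_lipschitzOnWith_of_compact hK fun x hx ↦ by
    obtain ⟨L, t, ht, hL⟩ :=
      ((hg x (hKU hx)).contDiffAt (hU.mem_nhds (hKU hx))).exists_lipschitzOnWith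
    exact ⟨L, t, mem_nhdsWithin_of_mem_nhds ht, hL⟩

lemma norm_taylor_two_le {f : E → F} {ζ z : E} {L : ℝ≥0}
    (hf : ∀ x ∈ closedBall ζ ‖z - ζ‖, ContDiffAt ℝ 2 f x)
    (hL : LipschitzOnWith L (fderiv ℝ (fderiv ℝ f)) (closedBall ζ ‖z - ζ‖)) :
    ‖f z - f ζ - fderiv ℝ f ζ (z - ζ) - (1 / 2 : ℝ) • fderiv ℝ (fderiv ℝ f) ζ (z - ζ) (z - ζ)‖
      ≤ L * ‖z - ζ‖ ^ 3 := by
  set R := ‖z - ζ‖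
  have hζ : ζ ∈ closedBall ζ R := mem_closedBall_self (norm_nonneg _)
  have hz : z ∈ closedBall ζ R := by simp [R, dist_eq_norm]
  have hnorm : ∀ x ∈ closedBall ζ R, ‖x - ζ‖ ≤ R := fun x hx ↦ by rwa [← dist_eq_norm]
  have hfderiv : ∀ x ∈ closedBall ζ R,
      ‖fderiv ℝ f x - fderiv ℝ f ζ - fderiv ℝ (fderiv ℝ f) ζ (x - ζ)‖ ≤ L * R ^ 2 := by
    intro x hx
    calc _ ≤ L * R * ‖x - ζ‖ :=
          (convex_closedBall ζ R).norm_image_sub_le_of_norm_fderiv_le'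
            (fun y hy ↦ ((hf y hy).fderiv_right le_rfl).differentiableAt one_ne_zero)
            (fun y hy ↦ (hL.norm_sub_le hy hζ).trans (by gcongr; exact hnorm y hy)) hζ hx
      _ ≤ L * R * R := by gcongr; exact hnorm x hx
      _ = L * R ^ 2 := by ring
  have hsymm : IsSymmSndFDerivAt ℝ f ζ := (hf ζ hζ).isSymmSndFDerivAt (by simp)
  -- By symmetry of `d²f(ζ)`, the derivative of the second order remainder `T` is the first
  -- order remainder of `fderiv ℝ f`.
  set T : E → F := fun x ↦
    f x - fderiv ℝ f ζ (x - ζ) - (1 / 2 : ℝ) • fderiv ℝ (fderiv ℝ f) ζ (x - ζ) (x - ζ)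
  have hT : ∀ x ∈ closedBall ζ R, HasFDerivAt T
      (fderiv ℝ f x - fderiv ℝ f ζ - fderiv ℝ (fderiv ℝ f) ζ (x - ζ)) x := by
    intro x hx
    have hsub : HasFDerivAt (fun x : E ↦ x - ζ) (ContinuousLinearMap.id ℝ E) x :=
      (hasFDerivAt_id x).sub_const ζ
    refine ((((hf x hx).differentiableAt two_ne_zero).hasFDerivAt.sub
      ((fderiv ℝ f ζ).hasFDerivAt.comp x hsub)).sub
      (((fderiv ℝ (fderiv ℝ f) ζ).hasFDerivAt_of_bilinear hsub hsub).const_smul (1 / 2 : ℝ)))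
      |>.congr_fderiv ?_
    ext u
    simp only [FunLike.coe_sub, FunLike.coe_smul, FunLike.coe_add, Pi.sub_apply, Pi.smul_apply,
      Pi.add_apply, ContinuousLinearMap.comp_id, ContinuousLinearMap.precompR_apply,
      ContinuousLinearMap.precompL_apply, ContinuousLinearMap.compL_apply,
      ContinuousLinearMap.coe_id', id_eq]
    rw [hsymm u (x - ζ)]
    module
  calc _ = ‖T z - T ζ‖ := by simp only [T, sub_self, map_zero, smul_zero, sub_zero]; abel_nf
    _ ≤ L * R ^ 2 * R :=
      (convex_closedBall ζ R).norm_image_sub_le_of_norm_hasFDerivWithin_le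
        (fun x hx ↦ (hT x hx).hasFDerivWithinAt) hfderiv hζ hz
    _ = L * R ^ 3 := by ring

end Calculus

/-- In the application `a, a'` are `⟨∂r(ζ), v⟩, ⟨∂r(z), v⟩`, `b` is `∑ ∂²r/∂ζ_j∂ζ_k v_j v_k`,
`l` is the Levi form at `ζ`, `s, t` are `r(ζ), r(z)` and `d = |v|`; `htaylor` is the real part
of the second order Taylor expansion of `r` at `ζ`. -/
lemma norm_add_sq_le_of_levi_estimates {a a' b l : ℂ} {s t d c K : ℝ} (hc : 0 < c) (hK : 0 ≤ K)
    (hs : s ≤ 0) (ht : t ≤ 0) (hl : c * d ^ 2 ≤ l.re)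
    (htaylor : |t - s + 2 * a.re - b.re - l.re| ≤ c / 2 * d ^ 2)
    (hb : ‖b‖ ≤ K * d ^ 2) (ha : ‖a' - a‖ ≤ K * d ^ 2) :
    ‖a'‖ + d ^ 2 ≤ (3 + (3 / 2 * K + 1) * (4 / c)) * ‖a - 1 / 2 * b - s‖ := by
  set φ := a - 1 / 2 * b - s
  have hre : c / 4 * d ^ 2 - s / 2 ≤ ‖φ‖ := by
    have hφ : φ.re = a.re - b.re / 2 - s := by simp [φ]; ring
    linarith [(abs_le.1 htaylor).1, Complex.re_le_norm φ]
  have hd : d ^ 2 ≤ 4 / c * ‖φ‖ := by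
    rw [div_mul_eq_mul_div, le_div_iff₀ hc]
    nlinarith [sq_nonneg d]
  have ha' : ‖a‖ ≤ ‖φ‖ - s + 1 / 2 * ‖b‖ := by
    calc ‖a‖ = ‖φ + 1 / 2 * b + s‖ := by simp only [φ]; ring_nf
      _ ≤ ‖φ‖ + 1 / 2 * ‖b‖ + -s := by
        refine (norm_add₃_le ..).trans_eq ?_
        simp [abs_of_nonpos hs]
      _ = ‖φ‖ - s + 1 / 2 * ‖b‖ := by ring
  have ha'' : ‖a'‖ ≤ ‖a‖ + ‖a' - a‖ := norm_le_norm_add_norm_sub' a' a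
  linarith [mul_le_mul_of_nonneg_left hd (by positivity : 0 ≤ 3 / 2 * K + 1),
    mul_nonneg hc.le (sq_nonneg d)]

section Wirtinger

open Complex (I)
open EuclideanSpace (single)

variable {n : ℕ}

local notation "ℂⁿ" => EuclideanSpace ℂ (Fin n)

noncomputable def wirtCLM (j : Fin n) : (ℂⁿ →L[ℝ] ℂ) →L[ℝ] ℂ :=
  (1 / 2 : ℂ) •
    (ContinuousLinearMap.apply ℝ ℂ (single j 1) - I • ContinuousLinearMap.apply ℝ ℂ (single j I))

noncomputable def wirtBarCLM (j : Fin n) : (ℂⁿ →L[ℝ] ℂ) →L[ℝ] ℂ :=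
  (1 / 2 : ℂ) •
    (ContinuousLinearMap.apply ℝ ℂ (single j 1) + I • ContinuousLinearMap.apply ℝ ℂ (single j I))

lemma norm_wirtCLM_apply_le (j : Fin n) (T : ℂⁿ →L[ℝ] ℂ) : ‖wirtCLM j T‖ ≤ ‖T‖ := by
  have hT : ∀ c : ℂ, ‖c‖ = 1 → ‖T (single j c)‖ ≤ ‖T‖ := fun c hc ↦
    (T.le_opNorm _).trans_eq (by simp [hc])
  calc ‖wirtCLM j T‖ = 1 / 2 * ‖T (single j 1) - I * T (single j I)‖ := by simp [wirtCLM]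
    _ ≤ 1 / 2 * (‖T‖ + ‖T‖) := by
        gcongr
        refine (norm_sub_le _ _).trans (add_le_add (hT 1 (by simp)) ?_)
        simpa using hT I (by simp)
    _ = ‖T‖ := by ring

lemma norm_wirtCLM_le (j : Fin n) : ‖(wirtCLM j : (ℂⁿ →L[ℝ] ℂ) →L[ℝ] ℂ)‖ ≤ 1 :=
  ContinuousLinearMap.opNorm_le_bound _ zero_le_one fun T ↦ by
    simpa using norm_wirtCLM_apply_le j T

lemma clm_apply_eq_sum_wirtCLM (T : ℂⁿ →L[ℝ] ℂ) (v : ℂⁿ) :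
    T v = ∑ j, (wirtCLM j T * v j + wirtBarCLM j T * conj (v j)) := by
  have hsingle : ∀ j, single j (v j) = (v j).re • single j (1 : ℂ) + (v j).im • single j I := by
    intro j; ext k; simp; split_ifs <;> simp
  conv_lhs => rw [← show ∑ j, single j (v j) = v by ext k; simp, map_sum]
  refine Finset.sum_congr rfl fun j _ ↦ ?_
  rw [hsingle, map_add, map_smul, map_smul]
  conv_rhs => rw [← Complex.re_add_im (v j)]
  simp only [wirtCLM, wirtBarCLM, smul_apply, sub_apply, add_apply,
    ContinuousLinearMap.apply_apply, smul_eq_mul, Complex.real_smul, map_add, map_mul,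
    Complex.conj_ofReal, Complex.conj_I]
  ring_nf
  simp only [Complex.I_sq]
  ring

variable {f : EuclideanSpace ℂ (Fin n) → ℂ} {x : EuclideanSpace ℂ (Fin n)}

lemma wirtD_eq_wirtCLM (j : Fin n) : wirtD n f x j = wirtCLM j (fderiv ℝ f x) := by
  simp [wirtD, wirtCLM]

lemma wirtDBar_eq_wirtBarCLM (j : Fin n) : wirtDBar n f x j = wirtBarCLM j (fderiv ℝ f x) := by
  simp [wirtDBar, wirtBarCLM, mul_add]

lemma fderiv_apply_eq_sum_wirtD (v : ℂⁿ) :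
    fderiv ℝ f x v = ∑ j, (wirtD n f x j * v j + wirtDBar n f x j * conj (v j)) := by
  simp only [wirtD_eq_wirtCLM, wirtDBar_eq_wirtBarCLM, ← clm_apply_eq_sum_wirtCLM]

lemma fderiv_wirtD (h : DifferentiableAt ℝ (fderiv ℝ f) x) (j : Fin n) :
    fderiv ℝ (fun y ↦ wirtD n f y j) x = (wirtCLM j).comp (fderiv ℝ (fderiv ℝ f) x) := by
  simp only [wirtD_eq_wirtCLM]
  exact ((wirtCLM j).hasFDerivAt.comp x h.hasFDerivAt).fderiv

lemma fderiv_wirtDBar (h : DifferentiableAt ℝ (fderiv ℝ f) x) (j : Fin n) :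
    fderiv ℝ (fun y ↦ wirtDBar n f y j) x = (wirtBarCLM j).comp (fderiv ℝ (fderiv ℝ f) x) := by
  simp only [wirtDBar_eq_wirtBarCLM]
  exact ((wirtBarCLM j).hasFDerivAt.comp x h.hasFDerivAt).fderiv

lemma fderiv_fderiv_apply_eq_sum_wirtD (h : DifferentiableAt ℝ (fderiv ℝ f) x) (u v : ℂⁿ) :
    fderiv ℝ (fderiv ℝ f) x u v = ∑ j, ∑ k,
      ((wirtD n (fun y ↦ wirtD n f y k) x j * u j +
          wirtDBar n (fun y ↦ wirtD n f y k) x j * conj (u j)) * v k +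
        (wirtD n (fun y ↦ wirtDBar n f y k) x j * u j +
          wirtDBar n (fun y ↦ wirtDBar n f y k) x j * conj (u j)) * conj (v k)) := by
  rw [clm_apply_eq_sum_wirtCLM, Finset.sum_comm]
  refine Finset.sum_congr rfl fun k _ ↦ ?_
  rw [← ContinuousLinearMap.comp_apply, ← fderiv_wirtD h, fderiv_apply_eq_sum_wirtD,
    ← ContinuousLinearMap.comp_apply, ← fderiv_wirtDBar h, fderiv_apply_eq_sum_wirtD,
    Finset.sum_mul, Finset.sum_mul, ← Finset.sum_add_distrib]

lemma conj_wirtD (j : Fin n) : conj (wirtD n f x j) = wirtDBar n (fun y ↦ conj (f y)) x j := by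
  rw [wirtD, wirtDBar, show (fun y ↦ conj (f y)) = Complex.conjLIE ∘ f from rfl,
    LinearIsometryEquiv.comp_fderiv]
  simp [map_ofNat, sub_eq_add_neg]

lemma conj_wirtDBar (j : Fin n) : conj (wirtDBar n f x j) = wirtD n (fun y ↦ conj (f y)) x j := by
  rw [wirtD, wirtDBar, show (fun y ↦ conj (f y)) = Complex.conjLIE ∘ f from rfl,
    LinearIsometryEquiv.comp_fderiv]
  simp [map_ofNat, sub_eq_add_neg]

/-- `⟨∂f(x), v⟩` in the paper's notation. -/
noncomputable def wirtPairing (f : ℂⁿ → ℂ) (x v : ℂⁿ) : ℂ :=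
  ∑ j, wirtD n f x j * v j

noncomputable def holHessian (f : ℂⁿ → ℂ) (x v : ℂⁿ) : ℂ :=
  ∑ j, ∑ k, wirtD n (fun y ↦ wirtD n f y k) x j * v j * v k

noncomputable def leviForm (f : ℂⁿ → ℂ) (x v : ℂⁿ) : ℂ :=
  ∑ j, ∑ k, wirtD n (fun y ↦ wirtDBar n f y k) x j * v j * conj (v k)

lemma norm_sum_mul_apply_le {c : Fin n → ℂ} {M : ℝ} (hc : ∀ j, ‖c j‖ ≤ M) (v : ℂⁿ) :
    ‖∑ j, c j * v j‖ ≤ n * M * ‖v‖ := by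
  calc ‖∑ j, c j * v j‖ ≤ ∑ j, ‖c j * v j‖ := norm_sum_le _ _
    _ ≤ ∑ _j : Fin n, M * ‖v‖ := Finset.sum_le_sum fun j _ ↦ by
        rw [norm_mul]
        exact mul_le_mul (hc j) (PiLp.norm_apply_le v j) (norm_nonneg _)
          ((norm_nonneg _).trans (hc j))
    _ = n * M * ‖v‖ := by simp [mul_assoc]

lemma norm_wirtPairing_sub_le (y v : ℂⁿ) :
    ‖wirtPairing f x v - wirtPairing f y v‖ ≤ n * ‖fderiv ℝ f x - fderiv ℝ f y‖ * ‖v‖ := by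
  simp only [wirtPairing, ← Finset.sum_sub_distrib, ← sub_mul]
  refine norm_sum_mul_apply_le (fun j ↦ ?_) v
  rw [wirtD_eq_wirtCLM, wirtD_eq_wirtCLM, ← map_sub]
  exact norm_wirtCLM_apply_le j _

lemma norm_holHessian_le (h : DifferentiableAt ℝ (fderiv ℝ f) x) (v : ℂⁿ) :
    ‖holHessian f x v‖ ≤ n ^ 2 * ‖fderiv ℝ (fderiv ℝ f) x‖ * ‖v‖ ^ 2 := by
  have hcoeff : ∀ j k, ‖wirtD n (fun y ↦ wirtD n f y k) x j‖ ≤ ‖fderiv ℝ (fderiv ℝ f) x‖ := by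
    intro j k
    rw [wirtD_eq_wirtCLM, fderiv_wirtD h]
    refine (norm_wirtCLM_apply_le j _).trans ((ContinuousLinearMap.opNorm_comp_le _ _).trans ?_)
    simpa using mul_le_mul_of_nonneg_right (norm_wirtCLM_le k) (norm_nonneg _)
  have hrow : ∀ j, ‖∑ k, wirtD n (fun y ↦ wirtD n f y k) x j * v k‖ ≤
      n * ‖fderiv ℝ (fderiv ℝ f) x‖ * ‖v‖ := fun j ↦ norm_sum_mul_apply_le (hcoeff j) v
  calc ‖holHessian f x v‖
      = ‖∑ j, (∑ k, wirtD n (fun y ↦ wirtD n f y k) x j * v k) * v j‖ := by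
        simp only [holHessian, Finset.sum_mul]
        congr 1
        exact Finset.sum_congr rfl fun j _ ↦ Finset.sum_congr rfl fun k _ ↦ by ring
    _ ≤ n * (n * ‖fderiv ℝ (fderiv ℝ f) x‖ * ‖v‖) * ‖v‖ := norm_sum_mul_apply_le hrow v
    _ = n ^ 2 * ‖fderiv ℝ (fderiv ℝ f) x‖ * ‖v‖ ^ 2 := by ring

section RealValued

variable (hf : ∀ y, conj (f y) = f y)
include hf

lemma wirtDBar_eq_conj_wirtD (y : ℂⁿ) (j : Fin n) : wirtDBar n f y j = conj (wirtD n f y j) := by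
  rw [conj_wirtD]
  simp only [hf]

lemma re_fderiv_apply (v : ℂⁿ) : (fderiv ℝ f x v).re = 2 * (wirtPairing f x v).re := by
  simp only [fderiv_apply_eq_sum_wirtD, wirtDBar_eq_conj_wirtD hf, wirtPairing, ← map_mul,
    Complex.re_sum, Complex.add_re, Complex.conj_re, Finset.mul_sum]
  exact Finset.sum_congr rfl fun j _ ↦ by ring

lemma re_fderiv_fderiv_apply (h : DifferentiableAt ℝ (fderiv ℝ f) x) (v : ℂⁿ) :
    (fderiv ℝ (fderiv ℝ f) x v v).re = 2 * (holHessian f x v).re + 2 * (leviForm f x v).re := by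
  have hbar : ∀ k, (fun y ↦ wirtDBar n f y k) = fun y ↦ conj (wirtD n f y k) := fun k ↦
    funext fun y ↦ wirtDBar_eq_conj_wirtD hf y k
  have hmixed : ∀ j k, wirtDBar n (fun y ↦ wirtD n f y k) x j =
      conj (wirtD n (fun y ↦ wirtDBar n f y k) x j) := by
    intro j k
    rw [hbar, ← conj_wirtDBar, Complex.conj_conj]
  have hbarbar : ∀ j k, wirtDBar n (fun y ↦ wirtDBar n f y k) x j =
      conj (wirtD n (fun y ↦ wirtD n f y k) x j) := by
    intro j k
    rw [hbar, conj_wirtD]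
  simp only [fderiv_fderiv_apply_eq_sum_wirtD h, holHessian, leviForm, hmixed, hbarbar,
    Complex.re_sum, Finset.mul_sum, ← Finset.sum_add_distrib]
  refine Finset.sum_congr rfl fun j _ ↦ Finset.sum_congr rfl fun k _ ↦ ?_
  simp only [Complex.add_re, Complex.add_im, Complex.mul_re, Complex.mul_im, Complex.conj_re,
    Complex.conj_im]
  ring

lemma abs_re_taylor_two_le {ζ z : ℂⁿ} {L : ℝ≥0}
    (hcd : ∀ y ∈ closedBall ζ ‖z - ζ‖, ContDiffAt ℝ 2 f y)
    (hL : LipschitzOnWith L (fderiv ℝ (fderiv ℝ f)) (closedBall ζ ‖z - ζ‖)) :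
    |(f z).re - (f ζ).re + 2 * (wirtPairing f ζ (ζ - z)).re - (holHessian f ζ (ζ - z)).re -
      (leviForm f ζ (ζ - z)).re| ≤ L * ‖ζ - z‖ ^ 3 := by
  have hd : DifferentiableAt ℝ (fderiv ℝ f) ζ :=
    ((hcd ζ (mem_closedBall_self (norm_nonneg _))).fderiv_right le_rfl).differentiableAt
      one_ne_zero
  have htaylor := norm_taylor_two_le hcd hL
  rw [← neg_sub ζ z] at htaylor
  simp only [map_neg, neg_apply, neg_neg, norm_neg, sub_neg_eq_add] at htaylor
  calc _ = |(f z - f ζ + fderiv ℝ f ζ (ζ - z) -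
        (1 / 2 : ℝ) • fderiv ℝ (fderiv ℝ f) ζ (ζ - z) (ζ - z)).re| := by
        rw [Complex.sub_re, Complex.add_re, Complex.sub_re, Complex.smul_re, re_fderiv_apply hf,
          re_fderiv_fderiv_apply hf hd, smul_eq_mul]
        ring_nf
    _ ≤ _ := Complex.abs_re_le_norm _
    _ ≤ L * ‖ζ - z‖ ^ 3 := htaylor

end RealValued

theorem norm_wirtPairing_add_sq_le {r : ℂⁿ → ℝ} {s : Set ℂⁿ} {ζ z : ℂⁿ} {c : ℝ} {L : ℝ≥0}
    (hc : 0 < c) (hs : s ∈ 𝓝 ζ) (hball : closedBall ζ ‖z - ζ‖ ⊆ s)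
    (hr : ∀ y ∈ s, ContDiffAt ℝ 2 (fun w ↦ (r w : ℂ)) y)
    (hL₁ : LipschitzOnWith L (fderiv ℝ (fun w ↦ (r w : ℂ))) s)
    (hL₂ : LipschitzOnWith L (fderiv ℝ (fderiv ℝ (fun w ↦ (r w : ℂ)))) s)
    (hlevi : c * ‖ζ - z‖ ^ 2 ≤ (leviForm (fun w ↦ (r w : ℂ)) ζ (ζ - z)).re)
    (hsmall : L * ‖ζ - z‖ ≤ c / 2) (hrζ : r ζ ≤ 0) (hrz : r z ≤ 0) :
    ‖wirtPairing (fun w ↦ (r w : ℂ)) z (ζ - z)‖ + ‖ζ - z‖ ^ 2 ≤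
      (3 + (3 / 2 * (n ^ 2 * L) + 1) * (4 / c)) * ‖leviPoly n r ζ z - r ζ‖ := by
  set f : ℂⁿ → ℂ := fun w ↦ (r w : ℂ)
  have hreal : ∀ y, conj (f y) = f y := fun y ↦ Complex.conj_ofReal _
  have hζ : ζ ∈ s := mem_of_mem_nhds hs
  have hz : z ∈ s := hball (by simp [dist_eq_norm])
  have hnorm : ‖z - ζ‖ = ‖ζ - z‖ := norm_sub_rev z ζ
  have hd : DifferentiableAt ℝ (fderiv ℝ f) ζ :=
    ((hr ζ hζ).fderiv_right le_rfl).differentiableAt one_ne_zero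
  have hleviPoly : leviPoly n r ζ z - r ζ =
      wirtPairing f ζ (ζ - z) - 1 / 2 * holHessian f ζ (ζ - z) - r ζ := by
    simp [leviPoly, wirtPairing, holHessian, f]
  have htaylor := abs_re_taylor_two_le hreal (fun y hy ↦ hr y (hball hy)) (hL₂.mono hball)
  have hn : (n : ℝ) ≤ n ^ 2 := by exact_mod_cast Nat.le_self_pow two_ne_zero n
  rw [hleviPoly]
  refine norm_add_sq_le_of_levi_estimates hc (by positivity) hrζ hrz hlevi
    (htaylor.trans ?_) ?_ ?_
  · calc L * ‖ζ - z‖ ^ 3 = L * ‖ζ - z‖ * ‖ζ - z‖ ^ 2 := by ring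
      _ ≤ c / 2 * ‖ζ - z‖ ^ 2 := by gcongr
  · refine (norm_holHessian_le hd _).trans ?_
    gcongr
    exact norm_fderiv_le_of_lipschitzOn ℝ hs hL₁
  · calc _ ≤ n * ‖fderiv ℝ f z - fderiv ℝ f ζ‖ * ‖ζ - z‖ := norm_wirtPairing_sub_le ζ _
      _ ≤ n * (L * ‖ζ - z‖) * ‖ζ - z‖ := by
        gcongr
        rw [← hnorm]
        exact hL₁.norm_sub_le hz hζ
      _ ≤ n ^ 2 * L * ‖ζ - z‖ ^ 2 := by
        rw [mul_assoc, mul_assoc, ← sq, ← mul_assoc]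
        gcongr

end Wirtinger

/-- Lemma 2.1: for a `C³` strictly plurisubharmonic function `r`, with
`φ(ζ,z) = F(ζ,z) - r(ζ)` the modified Levi polynomial, one has
`|φ(ζ,z)| ≥ c(|⟨∂r(z), ζ-z⟩| + |ζ-z|²)` on compact subsets, for
`r(ζ), r(z) ≤ 0` and `|ζ-z|` small. -/
theorem stmt_9 (n : ℕ) (U : Set (EuclideanSpace ℂ (Fin n))) (hU : IsOpen U)
    (r : EuclideanSpace ℂ (Fin n) → ℝ) (hr : ContDiffOn ℝ 3 r U)
    (hpsh : ∃ c : ℝ, 0 < c ∧ ∀ ζ ∈ U, ∀ w : Fin n → ℂ,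
      c * ∑ j, ‖w j‖ ^ 2 ≤
        (∑ j, ∑ k,
          wirtD n (fun w' => wirtDBar n (fun w'' => (r w'' : ℂ)) w' k) ζ j *
            w j * conj (w k)).re)
    (φ : EuclideanSpace ℂ (Fin n) → EuclideanSpace ℂ (Fin n) → ℂ)
    (hφ : ∀ ζ z, φ ζ z = leviPoly n r ζ z - (r ζ : ℂ)) :
    ∀ K : Set (EuclideanSpace ℂ (Fin n)), IsCompact K → K ⊆ U →
      ∃ c : ℝ, 0 < c ∧ ∃ δ : ℝ, 0 < δ ∧
        ∀ ζ ∈ K, ∀ z ∈ K, r ζ ≤ 0 → r z ≤ 0 → ‖ζ - z‖ < δ →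
          c * (‖∑ j, wirtD n (fun w => (r w : ℂ)) z j * (ζ j - z j)‖ + ‖ζ - z‖ ^ 2) ≤
            ‖φ ζ z‖ := by
  intro K hK hKU
  obtain ⟨c, hc, hlevi⟩ := hpsh
  have hf : ContDiffOn ℝ 3 (fun w ↦ (r w : ℂ)) U := Complex.ofRealCLM.contDiff.comp_contDiffOn hr
  have hDf := hf.fderiv_of_isOpen (m := 2) hU (by norm_num)
  obtain ⟨δ, hδ, hδU⟩ := hK.exists_cthickening_subset_open hU hKU
  obtain ⟨L₁, hL₁⟩ := ContDiffOn.exists_lipschitzOnWith_of_isCompact hU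
    (hDf.of_le (by norm_num)) hK.cthickening hδU
  obtain ⟨L₂, hL₂⟩ := ContDiffOn.exists_lipschitzOnWith_of_isCompact hU
    (hDf.fderiv_of_isOpen (m := 1) hU (by norm_num)) hK.cthickening hδU
  set L := max L₁ L₂
  set C := 3 + (3 / 2 * (n ^ 2 * L) + 1) * (4 / c)
  refine ⟨C⁻¹, by positivity, min δ (c / (2 * L + 1)), by positivity, ?_⟩
  intro ζ hζ z hz hrζ hrz hζz
  have hball : closedBall ζ δ ⊆ cthickening δ K := closedBall_subset_cthickening hζ δ
  have hzζ : ‖z - ζ‖ ≤ δ := by rw [norm_sub_rev]; exact hζz.le.trans (min_le_left _ _)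
  have hsmall : L * ‖ζ - z‖ ≤ c / 2 := by
    have hv := (hζz.trans_le (min_le_right _ _)).le
    rw [le_div_iff₀ (by positivity)] at hv
    nlinarith [norm_nonneg (ζ - z)]
  have hlevi' := hlevi ζ (hKU hζ) (ζ - z).ofLp
  rw [← EuclideanSpace.norm_sq_eq] at hlevi'
  have key := norm_wirtPairing_add_sq_le hc
    (Filter.mem_of_superset (closedBall_mem_nhds ζ hδ) hball)
    ((closedBall_subset_closedBall hzζ).trans hball)
    (fun y hy ↦ (hf.contDiffAt (hU.mem_nhds (hδU hy))).of_le (by norm_num))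
    (hL₁.weaken (le_max_left _ _)) (hL₂.weaken (le_max_right _ _)) hlevi' hsmall hrζ hrz
  rw [hφ, inv_mul_le_iff₀ (by positivity)]
  simpa only [wirtPairing, PiLp.sub_apply] using key
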